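/- For every t > 0 there exists a constant C = C(t) > 0 such that for all x ∈ ℝ³ with 0 < |x| ≤ 1: ∫_0^t ∫_{ℝ³} p_s(y) · (log|y − x|)² dy ds ≤ C. -/

import Mathlib

/-- Transition density of `d`-dimensional Brownian motion. -/
noncomputable def p (d : ℕ) (t : ℝ) (y : EuclideanSpace ℝ (Fin d)) : ℝ :=
  (2 * Real.pi * t) ^ (-(d : ℝ) / 2) * Real.exp (-‖y‖ ^ 2 / (2 * t))

/-!
Since `(log r)² ≤ 4 (r + r⁻¹)`, it suffices to bound the Gaussian averages of `‖y - x‖` and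
`‖y - x‖⁻¹`. The first is at most `2^(d/2) √s + ‖x‖`, comparing `p_s(y) ‖y‖` with `p_{2s}(y)`.
For the second, split at distance `√s` from `x`: inside, `p_s ≤ (2πs)^(-d/2)` and, in polar
coordinates, `∫_{B(0,R)} ‖z‖⁻¹ = d/(d-1) |B₁| R^(d-1)`; outside, `‖y - x‖⁻¹ ≤ s^(-1/2)`.
Both pieces are `O(s^(-1/2))`, which is integrable on `(0, t]`.
-/

open MeasureTheory Real Metric Set Module

lemma log_sq_le_of_one_le {r : ℝ} (hr : 1 ≤ r) : log r ^ 2 ≤ 4 * r := by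
  have hlog : log r ≤ 2 * √r := by
    have h := log_le_rpow_div (zero_le_one.trans hr) (one_half_pos (α := ℝ))
    rw [← sqrt_eq_rpow] at h
    linarith [show √r / (1 / 2) = 2 * √r by ring]
  calc log r ^ 2 ≤ (2 * √r) ^ 2 := pow_le_pow_left₀ (log_nonneg hr) hlog 2
    _ = 4 * r := by rw [mul_pow, sq_sqrt (by linarith)]; norm_num

lemma log_sq_le {r : ℝ} (hr : 0 ≤ r) : log r ^ 2 ≤ 4 * (r + r⁻¹) := by
  rcases le_total 1 r with h1 | h1
  · nlinarith [log_sq_le_of_one_le h1, inv_nonneg.2 hr]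
  · rcases hr.eq_or_lt with rfl | h0
    · simp
    · have := log_sq_le_of_one_le (one_le_inv_iff₀.2 ⟨h0, h1⟩)
      rw [log_inv, neg_sq] at this
      linarith

lemma mul_exp_neg_sq_div_le {s : ℝ} (hs : 0 < s) (u : ℝ) : u * exp (-u ^ 2 / (4 * s)) ≤ √s := by
  have hu : u ≤ √s * (u ^ 2 / (4 * s) + 1) := by
    obtain ⟨a, ha, rfl⟩ : ∃ a, 0 < a ∧ s = a ^ 2 := ⟨√s, sqrt_pos.2 hs, (sq_sqrt hs.le).symm⟩
    rw [sqrt_sq ha.le]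
    field_simp
    nlinarith [sq_nonneg (u - 2 * a)]
  rw [neg_div, exp_neg, ← div_eq_mul_inv, div_le_iff₀ (exp_pos _)]
  exact hu.trans (by gcongr; exact add_one_le_exp _)

lemma rpow_neg_div_two_mul_sqrt_pow {d : ℕ} (hd : 1 ≤ d) {s : ℝ} (hs : 0 < s) :
    (2 * π * s) ^ (-(d : ℝ) / 2) * √s ^ (d - 1) =
      (2 * π) ^ (-(d : ℝ) / 2) * s ^ (-(1 / 2 : ℝ)) := by
  rw [mul_rpow (by positivity) hs.le, sqrt_eq_rpow, ← rpow_natCast, ← rpow_mul hs.le, mul_assoc,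
    ← rpow_add hs, Nat.cast_sub hd]
  congr 2
  push_cast
  ring

lemma mul_inv_norm_sub_le {E : Type*} [SeminormedAddCommGroup E] {f : E → ℝ} {c R : ℝ}
    (x y : E) (hf0 : 0 ≤ f y) (hfc : f y ≤ c) (hR : 0 < R) :
    f y * ‖y - x‖⁻¹ ≤ c * (ball (0 : E) R).indicator (‖·‖⁻¹) (y - x) + R⁻¹ * f y := by
  by_cases hy : y - x ∈ ball (0 : E) R
  · rw [indicator_of_mem hy]
    have := mul_le_mul_of_nonneg_right hfc (inv_nonneg.2 (norm_nonneg (y - x)))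
    nlinarith [inv_nonneg.2 hR.le]
  · rw [mem_ball_zero_iff, not_lt] at hy
    rw [indicator_of_notMem (by simpa using hy), mul_zero, zero_add, mul_comm]
    exact mul_le_mul_of_nonneg_right (inv_anti₀ hR hy) hf0

section InvNorm

variable {E : Type*} [NormedAddCommGroup E] [NormedSpace ℝ E] [FiniteDimensional ℝ E]
  [MeasurableSpace E] [BorelSpace E] (μ : Measure E) [μ.IsAddHaarMeasure]

lemma integral_ball_inv_norm (hE : 2 ≤ finrank ℝ E) {R : ℝ} (hR : 0 ≤ R) :
    ∫ z in ball (0 : E) R, ‖z‖⁻¹ ∂μ =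
      finrank ℝ E / (finrank ℝ E - 1 : ℕ) * μ.real (ball 0 1) * R ^ (finrank ℝ E - 1) := by
  have : Nontrivial E := Module.nontrivial_of_finrank_pos (R := ℝ) (by omega)
  obtain ⟨n, hn⟩ : ∃ n, finrank ℝ E = n + 2 := ⟨finrank ℝ E - 2, by omega⟩
  have hradial : ∀ z : E, (ball (0 : E) R).indicator (‖·‖⁻¹) z = (Iio R).indicator (·⁻¹) ‖z‖ :=
    fun z => by simp [indicator]
  have hpow : ∀ r ∈ Ioi (0 : ℝ), r ^ (n + 1) • (Iio R).indicator (·⁻¹) r =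
      (Iio R).indicator (fun r => r ^ n) r := fun r (hr : 0 < r) => by
    by_cases h : r < R <;> simp [h, pow_succ, hr.ne']
  rw [← integral_indicator measurableSet_ball, funext hradial, integral_fun_norm_addHaar, hn,
    show n + 2 - 1 = n + 1 by omega, setIntegral_congr_fun measurableSet_Ioi hpow,
    setIntegral_indicator measurableSet_Iio, Ioi_inter_Iio, ← integral_Ioc_eq_integral_Ioo,
    ← intervalIntegral.integral_of_le hR, integral_pow, nsmul_eq_mul, smul_eq_mul,
    zero_pow n.succ_ne_zero, sub_zero]
  have : (n : ℝ) + 1 ≠ 0 := by positivity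
  push_cast
  field_simp

lemma integrableOn_ball_inv_norm (hE : 2 ≤ finrank ℝ E) {R : ℝ} (hR : 0 < R) :
    IntegrableOn (‖·‖⁻¹) (ball (0 : E) R) μ := by
  refine .of_integral_ne_zero ?_
  have hball : 0 < μ.real (ball 0 1) :=
    ENNReal.toReal_pos (measure_ball_pos μ 0 one_pos).ne' measure_ball_lt_top.ne
  rw [integral_ball_inv_norm μ hE hR.le]
  have : (0 : ℝ) < (finrank ℝ E - 1 : ℕ) := by norm_cast; omega
  have : (0 : ℝ) < finrank ℝ E := by norm_cast; omega
  positivity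

variable {μ} {f : E → ℝ} {c R : ℝ}

lemma integrable_mul_inv_norm_sub (hE : 2 ≤ finrank ℝ E) (hf : Integrable f μ)
    (hf0 : ∀ y, 0 ≤ f y) (hfc : ∀ y, f y ≤ c) (x : E) :
    Integrable (fun y => f y * ‖y - x‖⁻¹) μ := by
  refine Integrable.mono' (((integrableOn_ball_inv_norm μ hE one_pos).integrable_indicator
    measurableSet_ball).comp_sub_right x |>.const_mul c |>.add (hf.const_mul 1⁻¹))
    (hf.aestronglyMeasurable.mul (by fun_prop)) (.of_forall fun y => ?_)
  rw [Real.norm_of_nonneg (by have := hf0 y; positivity)]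
  exact mul_inv_norm_sub_le x y (hf0 y) (hfc y) one_pos

lemma integral_mul_inv_norm_sub_le (hE : 2 ≤ finrank ℝ E) (hf : Integrable f μ)
    (hf0 : ∀ y, 0 ≤ f y) (hfc : ∀ y, f y ≤ c) (x : E) (hR : 0 < R) :
    ∫ y, f y * ‖y - x‖⁻¹ ∂μ ≤ c * ∫ z in ball (0 : E) R, ‖z‖⁻¹ ∂μ + R⁻¹ * ∫ y, f y ∂μ := by
  have hball := ((integrableOn_ball_inv_norm μ hE hR).integrable_indicator
    measurableSet_ball).comp_sub_right x
  calc ∫ y, f y * ‖y - x‖⁻¹ ∂μ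
      ≤ ∫ y, c * (ball (0 : E) R).indicator (‖·‖⁻¹) (y - x) + R⁻¹ * f y ∂μ :=
        integral_mono (integrable_mul_inv_norm_sub hE hf hf0 hfc x)
          ((hball.const_mul c).add (hf.const_mul _))
          fun y => mul_inv_norm_sub_le x y (hf0 y) (hfc y) hR
    _ = c * ∫ z in ball (0 : E) R, ‖z‖⁻¹ ∂μ + R⁻¹ * ∫ y, f y ∂μ := by
        rw [integral_add (hball.const_mul c) (hf.const_mul _), integral_const_mul,
          integral_const_mul, integral_sub_right_eq_self ((ball (0 : E) R).indicator (‖·‖⁻¹)),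
          integral_indicator measurableSet_ball]

end InvNorm

section HeatKernel

variable {d : ℕ} {s : ℝ}

lemma p_nonneg (hs : 0 ≤ s) (y : EuclideanSpace ℝ (Fin d)) : 0 ≤ p d s y := by
  unfold p; positivity

lemma p_le (hs : 0 ≤ s) (y : EuclideanSpace ℝ (Fin d)) :
    p d s y ≤ (2 * π * s) ^ (-(d : ℝ) / 2) := by
  unfold p
  refine mul_le_of_le_one_right (by positivity) (exp_le_one_iff.2 ?_)
  rw [neg_div]
  exact neg_nonpos.2 (by positivity)

lemma continuous_p : Continuous (p d s) := by
  unfold p; fun_prop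

lemma integral_p (hs : 0 < s) : ∫ y, p d s y = 1 := by
  have hexp : ∀ y : EuclideanSpace ℝ (Fin d),
      exp (-‖y‖ ^ 2 / (2 * s)) = exp (-(2 * s)⁻¹ * ‖y‖ ^ 2) := fun y => by
    congr 1; field_simp
  simp only [p, integral_const_mul, hexp]
  rw [GaussianFourier.integral_rexp_neg_mul_sq_norm (by positivity), finrank_euclideanSpace_fin,
    div_inv_eq_mul, neg_div, rpow_neg (by positivity), ← mul_assoc, mul_comm π 2]
  exact inv_mul_cancel₀ (by positivity)

lemma integrable_p (hs : 0 < s) : Integrable (p d s) :=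
  .of_integral_ne_zero (by rw [integral_p hs]; exact one_ne_zero)

lemma p_mul_norm_le (hs : 0 < s) (y : EuclideanSpace ℝ (Fin d)) :
    p d s y * ‖y‖ ≤ 2 ^ ((d : ℝ) / 2) * √s * p d (2 * s) y := by
  have hsplit : exp (-‖y‖ ^ 2 / (2 * s)) =
      exp (-‖y‖ ^ 2 / (4 * s)) * exp (-‖y‖ ^ 2 / (4 * s)) := by
    rw [← exp_add]; congr 1; field_simp; ring
  have hconst : (2 * π * s) ^ (-(d : ℝ) / 2) =
      2 ^ ((d : ℝ) / 2) * (2 * π * (2 * s)) ^ (-(d : ℝ) / 2) := by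
    rw [show 2 * π * (2 * s) = 2 * (2 * π * s) by ring, mul_rpow (x := 2) (by norm_num)
      (by positivity), ← mul_assoc, neg_div, rpow_neg zero_le_two, mul_inv_cancel₀ (by positivity),
      one_mul]
  unfold p
  rw [hsplit, hconst, show 2 * (2 * s) = 4 * s by ring]
  calc 2 ^ ((d : ℝ) / 2) * (2 * π * (2 * s)) ^ (-(d : ℝ) / 2) *
        (exp (-‖y‖ ^ 2 / (4 * s)) * exp (-‖y‖ ^ 2 / (4 * s))) * ‖y‖
      = 2 ^ ((d : ℝ) / 2) * (2 * π * (2 * s)) ^ (-(d : ℝ) / 2) *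
        exp (-‖y‖ ^ 2 / (4 * s)) * (‖y‖ * exp (-‖y‖ ^ 2 / (4 * s))) := by ring
    _ ≤ 2 ^ ((d : ℝ) / 2) * (2 * π * (2 * s)) ^ (-(d : ℝ) / 2) *
        exp (-‖y‖ ^ 2 / (4 * s)) * √s := by gcongr; exact mul_exp_neg_sq_div_le hs ‖y‖
    _ = _ := by ring

lemma p_mul_norm_sub_le (hs : 0 < s) (x y : EuclideanSpace ℝ (Fin d)) :
    p d s y * ‖y - x‖ ≤ 2 ^ ((d : ℝ) / 2) * √s * p d (2 * s) y + ‖x‖ * p d s y := by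
  have := mul_le_mul_of_nonneg_left (norm_sub_le y x) (p_nonneg hs.le y)
  linarith [p_mul_norm_le hs y]

lemma integrable_p_mul_norm_sub (hs : 0 < s) (x : EuclideanSpace ℝ (Fin d)) :
    Integrable fun y => p d s y * ‖y - x‖ := by
  refine Integrable.mono' (((integrable_p (s := 2 * s) (by positivity)).const_mul
    (2 ^ ((d : ℝ) / 2) * √s)).add ((integrable_p hs).const_mul ‖x‖))
    (continuous_p.mul (by fun_prop)).aestronglyMeasurable (.of_forall fun y => ?_)
  rw [Real.norm_of_nonneg (by have := p_nonneg hs.le y; positivity)]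
  exact p_mul_norm_sub_le hs x y

lemma integral_p_mul_norm_sub_le (hs : 0 < s) (x : EuclideanSpace ℝ (Fin d)) :
    ∫ y, p d s y * ‖y - x‖ ≤ 2 ^ ((d : ℝ) / 2) * √s + ‖x‖ := by
  have h2s := (integrable_p (d := d) (s := 2 * s) (by positivity)).const_mul
    (2 ^ ((d : ℝ) / 2) * √s)
  have h1s := (integrable_p (d := d) hs).const_mul ‖x‖
  calc ∫ y, p d s y * ‖y - x‖
      ≤ ∫ y, 2 ^ ((d : ℝ) / 2) * √s * p d (2 * s) y + ‖x‖ * p d s y :=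
        integral_mono (integrable_p_mul_norm_sub hs x) (h2s.add h1s) (p_mul_norm_sub_le hs x)
    _ = 2 ^ ((d : ℝ) / 2) * √s + ‖x‖ := by
        rw [integral_add h2s h1s, integral_const_mul, integral_const_mul, integral_p hs,
          integral_p (by positivity), mul_one, mul_one]

lemma integral_p_mul_log_sq_le (hd : 2 ≤ d) (hs : 0 < s) (x : EuclideanSpace ℝ (Fin d)) :
    ∫ y, p d s y * log ‖y - x‖ ^ 2 ≤
      4 * (2 ^ ((d : ℝ) / 2) * √s + ‖x‖ + ((2 * π) ^ (-(d : ℝ) / 2) * (d / (d - 1 : ℕ)) *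
        volume.real (ball (0 : EuclideanSpace ℝ (Fin d)) 1) + 1) * s ^ (-(1 / 2 : ℝ))) := by
  have hE : 2 ≤ finrank ℝ (EuclideanSpace ℝ (Fin d)) := by rwa [finrank_euclideanSpace_fin]
  have hnorm := integrable_p_mul_norm_sub hs x
  have hinv := integrable_mul_inv_norm_sub hE (integrable_p hs) (p_nonneg hs.le) (p_le hs.le) x
  have hsqrt : (√s)⁻¹ = s ^ (-(1 / 2 : ℝ)) := by rw [sqrt_eq_rpow, rpow_neg hs.le]
  calc ∫ y, p d s y * log ‖y - x‖ ^ 2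
      ≤ ∫ y, 4 * (p d s y * ‖y - x‖ + p d s y * ‖y - x‖⁻¹) := by
        refine integral_mono_of_nonneg (.of_forall fun y => ?_) ((hnorm.add hinv).const_mul 4)
          (.of_forall fun y => ?_)
        · have := p_nonneg hs.le y; positivity
        · have := mul_le_mul_of_nonneg_left (log_sq_le (norm_nonneg (y - x))) (p_nonneg hs.le y)
          linarith
    _ = 4 * ((∫ y, p d s y * ‖y - x‖) + ∫ y, p d s y * ‖y - x‖⁻¹) := by
        rw [integral_const_mul, integral_add hnorm hinv]
    _ ≤ 4 * (2 ^ ((d : ℝ) / 2) * √s + ‖x‖ + ((2 * π * s) ^ (-(d : ℝ) / 2) *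
          (∫ z in ball (0 : EuclideanSpace ℝ (Fin d)) √s, ‖z‖⁻¹) + (√s)⁻¹ * ∫ y, p d s y)) := by
        gcongr
        · exact integral_p_mul_norm_sub_le hs x
        · exact integral_mul_inv_norm_sub_le hE (integrable_p hs) (p_nonneg hs.le) (p_le hs.le) x
            (sqrt_pos.2 hs)
    _ = _ := by
        rw [integral_ball_inv_norm _ hE (sqrt_nonneg s), integral_p hs, finrank_euclideanSpace_fin,
          hsqrt]
        linear_combination 4 * (d / (d - 1 : ℕ) : ℝ) *
          volume.real (ball (0 : EuclideanSpace ℝ (Fin d)) 1) *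
          rpow_neg_div_two_mul_sqrt_pow (by omega : 1 ≤ d) hs

lemma exists_intervalIntegral_p_mul_log_sq_le (hd : 2 ≤ d) {t : ℝ} (ht : 0 ≤ t) :
    ∃ C, ∀ x : EuclideanSpace ℝ (Fin d), ‖x‖ ≤ 1 →
      ∫ s in 0..t, ∫ y, p d s y * log ‖y - x‖ ^ 2 ≤ C := by
  let K : ℝ := (2 * π) ^ (-(d : ℝ) / 2) * (d / (d - 1 : ℕ)) *
    volume.real (ball (0 : EuclideanSpace ℝ (Fin d)) 1) + 1
  let g : ℝ → ℝ := fun s => 4 * (2 ^ ((d : ℝ) / 2) * √t + 1 + K * s ^ (-(1 / 2 : ℝ)))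
  have hg : IntegrableOn g (Ioc 0 t) :=
    ((intervalIntegrable_const.add
      ((intervalIntegral.intervalIntegrable_rpow' (by norm_num)).const_mul K)).const_mul 4).1
  refine ⟨∫ s in Ioc 0 t, g s, fun x hx => ?_⟩
  rw [intervalIntegral.integral_of_le ht]
  refine integral_mono_of_nonneg (ae_restrict_of_forall_mem measurableSet_Ioc fun s hs => ?_) hg
    (ae_restrict_of_forall_mem measurableSet_Ioc fun s hs => ?_)
  · exact integral_nonneg fun y => mul_nonneg (p_nonneg hs.1.le y) (sq_nonneg _)
  · refine (integral_p_mul_log_sq_le hd hs.1 x).trans ?_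
    show _ ≤ 4 * (_ + _ + _)
    gcongr
    exact hs.2

end HeatKernel

theorem lemma3ii_martingale_second_moment_bound (t : ℝ) (ht : 0 < t) :
    ∃ C : ℝ, 0 < C ∧ ∀ x : EuclideanSpace ℝ (Fin 3), 0 < ‖x‖ → ‖x‖ ≤ 1 →
      (∫ s in (0:ℝ)..t, ∫ y : EuclideanSpace ℝ (Fin 3),
        p 3 s y * (Real.log ‖y - x‖) ^ 2) ≤ C := by
  obtain ⟨C, hC⟩ := exists_intervalIntegral_p_mul_log_sq_le (d := 3) (by norm_num) ht.le
  exact ⟨max C 1, by positivity, fun x _ hx => (hC x hx).trans (le_max_left C 1)⟩
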